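/- For any ε > 0, M > 0, and any request sequence r, the number of values of k satisfying both m(k,r) ≤ M and L(k,r) ≥ ε·L(1,r) is at most (⌈2M⌉)·(1 + log_{4/3}(1/ε)). -/

import Mathlib

/-- Length of the maximal prefix of `r` containing at most `k` distinct items. -/
def maxPrefixLen {α : Type*} [DecidableEq α] (k : ℕ) (r : List α) : ℕ :=
  ((List.range (r.length + 1)).filter (fun n => (r.take n).dedup.length ≤ k)).foldr max 0

/-- Greedy phase partition, with fuel for termination. -/
def phasesAux {α : Type*} [DecidableEq α] (k : ℕ) : ℕ → List α → List (List α)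
  | 0, _ => []
  | _, [] => []
  | (fuel+1), r =>
      let n := max 1 (maxPrefixLen k r)
      r.take n :: phasesAux k fuel (r.drop n)

/-- The `k`-phase partition of `r`: greedy maximal consecutive blocks, each
containing requests to at most `k` distinct items. -/
def phases {α : Type*} [DecidableEq α] (k : ℕ) (r : List α) : List (List α) :=
  phasesAux k r.length r

/-- `L(k,r)`: the number of `k`-phases of `r`, minus 1. -/
def numPhases {α : Type*} [DecidableEq α] (k : ℕ) (r : List α) : ℕ :=
  (phases k r).length - 1

/-- For each `k`-phase other than the first, the number of new requests:
items requested in the phase but not in the previous phase. -/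
def newCounts {α : Type*} [DecidableEq α] (k : ℕ) (r : List α) : List ℕ :=
  ((phases k r).zip (phases k r).tail).map
    (fun p => (p.2.dedup.filter (fun x => x ∉ p.1)).length)

/-- `m(k,r)`: the average number of new requests per `k`-phase (other than the first). -/
noncomputable def avgNew {α : Type*} [DecidableEq α] (k : ℕ) (r : List α) : ℝ :=
  ((newCounts k r).sum : ℝ) / (numPhases k r : ℝ)

/-- Index in `r` at which the `i`-th `k`-phase starts. -/
def phaseStart {α : Type*} [DecidableEq α] (k : ℕ) (r : List α) (i : ℕ) : ℕ :=
  (((phases k r).take i).map List.length).sum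

/-!
Write `L k` for `numPhases k r`. Every `k'`-phase except the last contains exactly `k'` items.
Cover it by the consecutive `k`-phases from the last one starting strictly before it (from
position `0` for the first `k'`-phase) to the one containing its last request: together they
hold at most `k` items plus the new requests of all but the first of them, and successive
`k'`-phases charge disjoint sets of `k`-phases. Hence `(k' - k) * L k' ≤ ∑ newCounts k r`
for `1 ≤ k ≤ k'`, so `m(k) ≤ M` forces `2 * L k' ≤ L k` once `k' ≥ k + ⌈2M⌉`. Along a
residue class mod `⌈2M⌉` the admissible `k` therefore have `L k` decaying geometrically from
at most `L 1` while staying above `ε L 1`, so each class holds at most `1 + log_{4/3}(1/ε)`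
of them.
-/

open Finset

section DecayCount

variable {f : ℕ → ℝ} {ρ ε A : ℝ}

theorem pow_card_mul_le_of_decay {G : Set ℕ} (hρ : 0 ≤ ρ) (hfA : ∀ x ∈ G, f x ≤ A)
    (hdecay : ∀ x ∈ G, ∀ y ∈ G, x < y → ρ * f y ≤ f x) (T : Finset ℕ) (hT : ↑T ⊆ G)
    {k : ℕ} (hk : k ∈ G) (hTk : ∀ x ∈ T, x < k) : ρ ^ #T * f k ≤ A := by
  induction T using Finset.induction_on_max generalizing k with
  | empty => simpa using hfA k hk
  | insert a s has ih =>
    have haG : a ∈ G := hT (mem_insert_self a s)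
    have hak : a < k := hTk a (mem_insert_self a s)
    rw [card_insert_of_notMem fun h => (has a h).false, pow_succ, mul_assoc]
    calc ρ ^ #s * (ρ * f k) ≤ ρ ^ #s * f a :=
          mul_le_mul_of_nonneg_left (hdecay a haG k hk hak) (by positivity)
      _ ≤ A := ih (fun x hx => hT (mem_insert_of_mem hx)) haG has

theorem card_le_one_add_logb_of_decay {G : Set ℕ} (hρ : 1 < ρ) (hε : 0 < ε) (hε1 : ε ≤ 1)
    (hA : 0 < A) (hfA : ∀ x ∈ G, f x ≤ A) (hεf : ∀ x ∈ G, ε * A ≤ f x)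
    (hdecay : ∀ x ∈ G, ∀ y ∈ G, x < y → ρ * f y ≤ f x) (T : Finset ℕ) (hT : ↑T ⊆ G) :
    (#T : ℝ) ≤ 1 + Real.logb ρ (1 / ε) := by
  have hlog : 0 ≤ Real.logb ρ (1 / ε) := Real.logb_nonneg hρ (one_le_one_div hε hε1)
  rcases T.eq_empty_or_nonempty with rfl | hne
  · simp only [card_empty, CharP.cast_eq_zero]
    linarith
  set k := T.max' hne
  have hkT : k ∈ T := T.max'_mem hne
  have hpow := pow_card_mul_le_of_decay (zero_le_one.trans hρ.le) hfA hdecay (T.erase k)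
    (fun x hx => hT (mem_of_mem_erase hx)) (hT hkT)
    (fun x hx => lt_of_le_of_ne (T.le_max' x (mem_of_mem_erase hx)) (ne_of_mem_erase hx))
  have hpow_le : ρ ^ #(T.erase k) ≤ 1 / ε := by
    rw [le_div_iff₀ hε, ← mul_le_mul_iff_of_pos_right hA, one_mul, mul_assoc]
    exact (mul_le_mul_of_nonneg_left (hεf k (hT hkT)) (by positivity)).trans hpow
  have hcard : (#(T.erase k) : ℝ) ≤ Real.logb ρ (1 / ε) := by
    rwa [Real.le_logb_iff_rpow_le hρ (by positivity), Real.rpow_natCast]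
  rw [card_erase_of_mem hkT, Nat.cast_sub (card_pos.2 hne)] at hcard
  push_cast at hcard
  linarith

theorem add_le_of_mod_eq_of_lt {d x y : ℕ} (hmod : x % d = y % d) (hxy : x < y) :
    x + d ≤ y := by
  have := Nat.le_of_dvd (Nat.sub_pos_of_lt hxy) ((Nat.modEq_iff_dvd' hxy.le).1 hmod)
  omega

theorem ncard_le_mul_one_add_logb_of_decay {S : Set ℕ} {d : ℕ} (hd : 0 < d) (hρ : 1 < ρ)
    (hε : 0 < ε) (hε1 : ε ≤ 1) (hA : 0 < A) (hfA : ∀ k ∈ S, f k ≤ A)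
    (hεf : ∀ k ∈ S, ε * A ≤ f k) (hdecay : ∀ k ∈ S, ∀ k' ∈ S, k + d ≤ k' → ρ * f k' ≤ f k) :
    (S.ncard : ℝ) ≤ d * (1 + Real.logb ρ (1 / ε)) := by
  have hlog : 0 ≤ Real.logb ρ (1 / ε) := Real.logb_nonneg hρ (one_le_one_div hε hε1)
  rcases S.finite_or_infinite with hS | hS
  swap
  · rw [hS.ncard, Nat.cast_zero]
    positivity
  -- split `S` into residue classes mod `d`: each is a chain of `ρ`-fold decays
  rw [Set.ncard_eq_toFinset_card S hS, card_eq_sum_card_fiberwise (t := range d) (f := (· % d))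
    fun k _ => mem_range.2 (Nat.mod_lt k hd)]
  push_cast
  calc ∑ j ∈ range d, (#{k ∈ hS.toFinset | k % d = j} : ℝ)
      ≤ ∑ _j ∈ range d, (1 + Real.logb ρ (1 / ε)) := by
        refine sum_le_sum fun j _ => card_le_one_add_logb_of_decay (G := {k ∈ S | k % d = j})
          hρ hε hε1 hA (fun x hx => hfA x hx.1) (fun x hx => hεf x hx.1)
          (fun x hx y hy hxy => hdecay x hx.1 y hy.1
            (add_le_of_mod_eq_of_lt (hx.2.trans hy.2.symm) hxy)) _ ?_
        intro x hx
        simpa using hx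
    _ = d * (1 + Real.logb ρ (1 / ε)) := by rw [sum_const, card_range, nsmul_eq_mul]

end DecayCount

section Phases

variable {α : Type*} {k k' a a' b b' c : ℕ} {r : List α}

open List in
theorem extract_sublist_extract (ha : a ≤ a') (hb : b' ≤ b) :
    r.extract a' b' <+ r.extract a b := by
  simp only [List.extract_eq_take_drop]
  calc (r.drop a').take (b' - a') <+ (r.drop a').take (b - a') :=
        (List.take_prefix_take_left (by omega)).sublist
    _ = ((r.drop a).take (b - a)).drop (a' - a) := by
        rw [List.drop_take, List.drop_drop, Nat.sub_sub, Nat.add_sub_cancel' ha]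
    _ <+ (r.drop a).take (b - a) := List.drop_sublist _ _

variable [DecidableEq α]

theorem maxPrefixLen_mem (k : ℕ) (r : List α) :
    maxPrefixLen k r ∈
      (List.range (r.length + 1)).filter fun n => (r.take n).dedup.length ≤ k :=
  List.maximum_mem (List.foldr_max_of_ne_nil (List.ne_nil_of_mem (a := 0) (by simp))).symm

theorem maxPrefixLen_le_length (k : ℕ) (r : List α) : maxPrefixLen k r ≤ r.length := by
  have := List.mem_range.1 (List.mem_of_mem_filter (maxPrefixLen_mem k r))
  omega

theorem length_dedup_take_maxPrefixLen_le (k : ℕ) (r : List α) :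
    (r.take (maxPrefixLen k r)).dedup.length ≤ k := by
  simpa using List.of_mem_filter (maxPrefixLen_mem k r)

theorem le_maxPrefixLen {n : ℕ} (hn : n ≤ r.length) (hk : (r.take n).dedup.length ≤ k) :
    n ≤ maxPrefixLen k r :=
  List.le_max_of_le' 0 (List.mem_filter.2 ⟨List.mem_range.2 (by omega), by simpa using hk⟩) le_rfl

theorem lt_length_dedup_take_maxPrefixLen_succ (h : maxPrefixLen k r < r.length) :
    k < (r.take (maxPrefixLen k r + 1)).dedup.length := by
  by_contra! hc
  have := le_maxPrefixLen h hc
  omega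

theorem phasesAux_eq_of_length_le {f₁ f₂ : ℕ} (h₁ : r.length ≤ f₁) (h₂ : r.length ≤ f₂) :
    phasesAux k f₁ r = phasesAux k f₂ r := by
  induction f₁ generalizing f₂ r with
  | zero => rw [List.length_eq_zero_iff.1 (Nat.le_zero.1 h₁)]; cases f₂ <;> rfl
  | succ f ih =>
    match r, f₂ with
    | [], f₂ => cases f₂ <;> rfl
    | x :: t, 0 => simp at h₂
    | x :: t, f₂ + 1 =>
      simp only [phasesAux]
      congr 1
      apply ih <;> simp at h₁ h₂ ⊢ <;> omega

theorem phases_of_ne_nil (hr : r ≠ []) :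
    phases k r = r.take (max 1 (maxPrefixLen k r)) ::
      phases k (r.drop (max 1 (maxPrefixLen k r))) := by
  obtain ⟨x, t, rfl⟩ := List.exists_cons_of_ne_nil hr
  exact congrArg _ (phasesAux_eq_of_length_le (by simp) le_rfl)

variable (k r) in
def phaseEnd (a : ℕ) : ℕ := a + max 1 (maxPrefixLen k (r.drop a))

variable (r) in
def segItems (a b : ℕ) : Finset α := (r.extract a b).toFinset

theorem lt_phaseEnd (k : ℕ) (r : List α) (a : ℕ) : a < phaseEnd k r a := by
  unfold phaseEnd
  omega

theorem phaseEnd_of_length_le (h : r.length ≤ a) : phaseEnd k r a = a + 1 := by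
  simp [phaseEnd, List.drop_eq_nil_of_le h, maxPrefixLen]

theorem phaseEnd_le_length (ha : a < r.length) : phaseEnd k r a ≤ r.length := by
  have := maxPrefixLen_le_length k (r.drop a)
  simp only [List.length_drop] at this
  unfold phaseEnd
  omega

theorem phaseEnd_eq (hk : 1 ≤ k) (ha : a < r.length) :
    phaseEnd k r a = a + maxPrefixLen k (r.drop a) := by
  have : 1 ≤ maxPrefixLen k (r.drop a) :=
    le_maxPrefixLen (by simp; omega) ((List.dedup_sublist _).length_le.trans
      ((List.length_take_le 1 _).trans hk))
  unfold phaseEnd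
  omega

theorem phases_drop_of_lt (ha : a < r.length) :
    phases k (r.drop a) = r.extract a (phaseEnd k r a) :: phases k (r.drop (phaseEnd k r a)) := by
  rw [phases_of_ne_nil (by simpa using ha), List.drop_drop, List.extract_eq_take_drop, phaseEnd]
  simp

theorem phases_drop_of_le (h : r.length ≤ a) : phases k (r.drop a) = [] := by
  rw [List.drop_eq_nil_of_le h]
  rfl

theorem segItems_mono (ha : a ≤ a') (hb : b' ≤ b) : segItems r a' b' ⊆ segItems r a b := by
  intro x
  simp only [segItems, List.mem_toFinset]
  exact fun hx => (extract_sublist_extract ha hb).subset hx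

theorem segItems_union (hab : a ≤ b) (hbc : b ≤ c) :
    segItems r a c = segItems r a b ∪ segItems r b c := by
  simp only [segItems, List.extract_eq_take_drop]
  rw [← List.toFinset_append, show c - a = (b - a) + (c - b) by omega, List.take_add,
    List.drop_drop, Nat.add_sub_cancel' hab]

theorem card_segItems_phaseEnd_le (hk : 1 ≤ k) : #(segItems r a (phaseEnd k r a)) ≤ k := by
  rcases lt_or_ge a r.length with ha | ha
  · rw [segItems, List.card_toFinset, List.extract_eq_take_drop, phaseEnd_eq hk ha,
      Nat.add_sub_cancel_left]
    exact length_dedup_take_maxPrefixLen_le k _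
  · simp [segItems, List.drop_eq_nil_of_le ha]

theorem card_toFinset_take_maxPrefixLen (h : maxPrefixLen k r < r.length) :
    #(r.take (maxPrefixLen k r)).toFinset = k := by
  have hle := length_dedup_take_maxPrefixLen_le k r
  have hlt := lt_length_dedup_take_maxPrefixLen_succ h
  rw [← List.card_toFinset] at hle hlt
  set n := maxPrefixLen k r
  have hsucc : #(r.take (n + 1)).toFinset ≤ #(r.take n).toFinset + 1 := by
    rw [List.take_add_one, List.toFinset_append]
    exact (card_union_le _ _).trans (by gcongr; cases r[n]? <;> simp)
  omega

theorem card_segItems_phaseEnd (hk : 1 ≤ k) (hb : phaseEnd k r a < r.length) :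
    #(segItems r a (phaseEnd k r a)) = k := by
  have ha : a < r.length := (lt_phaseEnd k r a).trans hb
  have hend := phaseEnd_eq hk ha
  rw [segItems, List.extract_eq_take_drop, hend, Nat.add_sub_cancel_left]
  exact card_toFinset_take_maxPrefixLen (by simp; omega)

theorem exists_iterate_lt_le_iterate_succ {f : ℕ → ℕ} (hf : ∀ n, n < f n) (hcb : c < b) :
    ∃ j, f^[j] c < b ∧ b ≤ f^[j + 1] c := by
  induction b, hcb using Nat.le_induction with
  | base => exact ⟨0, Nat.lt_succ_self c, hf c⟩
  | succ b hcb ih =>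
    obtain ⟨j, hjb, hbj⟩ := ih
    rcases hbj.lt_or_eq with hlt | heq
    · exact ⟨j, hjb.trans (Nat.lt_succ_self b), hlt⟩
    · refine ⟨j + 1, heq ▸ Nat.lt_succ_self b, ?_⟩
      rw [Function.iterate_succ_apply' f (j + 1), ← heq]
      exact hf b

theorem phaseEnd_mono (hk : 1 ≤ k) (hkk' : k ≤ k') (haa' : a ≤ a') :
    phaseEnd k r a ≤ phaseEnd k' r a' := by
  rcases le_or_gt (phaseEnd k r a) (a' + 1) with h | h
  · exact h.trans (lt_phaseEnd k' r a')
  have ha : a < r.length := by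
    by_contra! ha
    rw [phaseEnd_of_length_le ha] at h
    omega
  have hend := phaseEnd_le_length (k := k) ha
  have hprefix : phaseEnd k r a - a' ≤ maxPrefixLen k' (r.drop a') := by
    refine le_maxPrefixLen (by simp; omega) ?_
    rw [← List.card_toFinset]
    calc #(segItems r a' (phaseEnd k r a)) ≤ #(segItems r a (phaseEnd k r a)) :=
          card_le_card (segItems_mono haa' le_rfl)
      _ ≤ k' := (card_segItems_phaseEnd_le hk).trans hkk'
  have := le_max_right 1 (maxPrefixLen k' (r.drop a'))
  show phaseEnd k r a ≤ a' + max 1 (maxPrefixLen k' (r.drop a'))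
  omega

theorem length_phases_drop_le (hk : 1 ≤ k) (hkk' : k ≤ k') {a a' : ℕ} (haa' : a ≤ a') :
    (phases k' (r.drop a')).length ≤ (phases k (r.drop a)).length := by
  by_cases ha' : a' < r.length
  · rw [phases_drop_of_lt ha', phases_drop_of_lt (haa'.trans_lt ha')]
    simpa using length_phases_drop_le hk hkk' (phaseEnd_mono (r := r) hk hkk' haa')
  · simp [phases_drop_of_le (not_lt.1 ha')]
termination_by r.length - a'
decreasing_by have := lt_phaseEnd k' r a'; omega

theorem numPhases_le_of_le (hk : 1 ≤ k) (hkk' : k ≤ k') : numPhases k' r ≤ numPhases k r :=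
  Nat.sub_le_sub_right (by simpa using length_phases_drop_le (r := r) hk hkk' (le_refl 0)) 1

def totalNew (l : List (List α)) : ℕ :=
  ((l.zip l.tail).map fun p => #(p.2.toFinset \ p.1.toFinset)).sum

theorem length_filter_dedup_eq_card_sdiff (p q : List α) :
    (q.dedup.filter (· ∉ p)).length = #(q.toFinset \ p.toFinset) := by
  rw [← List.toFinset_card_of_nodup ((List.nodup_dedup q).filter _), List.toFinset_filter]
  congr 1
  ext x
  simp

theorem sum_newCounts_eq_totalNew (k : ℕ) (r : List α) :
    (newCounts k r).sum = totalNew (phases k r) := by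
  unfold newCounts totalNew
  congr 1
  exact List.map_congr_left fun p _ => by simpa using length_filter_dedup_eq_card_sdiff p.1 p.2

theorem totalNew_cons_cons (p q : List α) (l : List (List α)) :
    totalNew (p :: q :: l) = #(q.toFinset \ p.toFinset) + totalNew (q :: l) :=
  rfl

variable (k r) in
def newInNextPhase (a : ℕ) : ℕ :=
  #(segItems r (phaseEnd k r a) (phaseEnd k r (phaseEnd k r a)) \ segItems r a (phaseEnd k r a))

theorem totalNew_phases_drop (hb : phaseEnd k r a < r.length) :
    totalNew (phases k (r.drop a)) =
      newInNextPhase k r a + totalNew (phases k (r.drop (phaseEnd k r a))) := by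
  rw [phases_drop_of_lt ((lt_phaseEnd k r a).trans hb), phases_drop_of_lt hb, totalNew_cons_cons]
  rfl

theorem totalNew_phases_drop_iterate {j : ℕ} (hj : (phaseEnd k r)^[j] c < r.length) :
    totalNew (phases k (r.drop c)) =
      ∑ t ∈ range j, newInNextPhase k r ((phaseEnd k r)^[t] c) +
        totalNew (phases k (r.drop ((phaseEnd k r)^[j] c))) := by
  induction j with
  | zero => simp
  | succ j ih =>
    rw [Function.iterate_succ_apply'] at hj ⊢
    rw [ih ((lt_phaseEnd k r _).trans hj), totalNew_phases_drop hj, sum_range_succ, add_assoc]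

theorem card_segItems_iterate_le (hk : 1 ≤ k) (j : ℕ) :
    #(segItems r c ((phaseEnd k r)^[j + 1] c)) ≤
      k + ∑ t ∈ range j, newInNextPhase k r ((phaseEnd k r)^[t] c) := by
  induction j with
  | zero => simpa using card_segItems_phaseEnd_le hk
  | succ j ih =>
    have hiter (i : ℕ) : c ≤ (phaseEnd k r)^[i] c :=
      Function.id_le_iterate_of_id_le (fun n => (lt_phaseEnd k r n).le) i c
    set m := (phaseEnd k r)^[j + 1] c
    have hcm : c ≤ m := hiter (j + 1)
    have hm : phaseEnd k r ((phaseEnd k r)^[j] c) = m := (Function.iterate_succ_apply' _ _ _).symm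
    have hnew : segItems r m (phaseEnd k r m) \ segItems r c m ⊆
        segItems r m (phaseEnd k r m) \ segItems r ((phaseEnd k r)^[j] c) m :=
      sdiff_subset_sdiff subset_rfl (segItems_mono (hiter j) le_rfl)
    rw [Function.iterate_succ_apply', segItems_union hcm (lt_phaseEnd k r m).le,
      ← union_sdiff_self_eq_union, sum_range_succ, newInNextPhase, hm]
    have := card_le_card hnew
    have := card_union_le (segItems r c m) (segItems r m (phaseEnd k r m) \ segItems r c m)
    omega

theorem sub_mul_length_phases_drop_le (hk : 1 ≤ k) (hkk' : k ≤ k') {a c : ℕ} (hca : c ≤ a) :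
    (k' - k) * ((phases k' (r.drop a)).length - 1) ≤ totalNew (phases k (r.drop c)) := by
  by_cases hb : phaseEnd k' r a < r.length
  swap
  · have : (phases k' (r.drop a)).length ≤ 1 := by
      rcases lt_or_ge a r.length with ha | ha
      · simp [phases_drop_of_lt ha, phases_drop_of_le (not_lt.1 hb)]
      · simp [phases_drop_of_le ha]
    simp [Nat.sub_eq_zero_of_le this]
  have ha : a < r.length := (lt_phaseEnd k' r a).trans hb
  set b := phaseEnd k' r a
  -- the `j`-th `k`-phase boundary after `c` is the last one before the next `k'`-phase
  obtain ⟨j, hjb, hbj⟩ :=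
    exists_iterate_lt_le_iterate_succ (lt_phaseEnd k r) (hca.trans_lt (lt_phaseEnd k' r a))
  have hwindow : k' ≤ k + ∑ t ∈ range j, newInNextPhase k r ((phaseEnd k r)^[t] c) :=
    calc k' = #(segItems r a b) := (card_segItems_phaseEnd (hk.trans hkk') hb).symm
      _ ≤ #(segItems r c ((phaseEnd k r)^[j + 1] c)) := card_le_card (segItems_mono hca hbj)
      _ ≤ _ := card_segItems_iterate_le hk j
  have hrest := sub_mul_length_phases_drop_le hk hkk' hjb.le
  have hb_phases : 1 ≤ (phases k' (r.drop b)).length := by simp [phases_drop_of_lt hb]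
  rw [totalNew_phases_drop_iterate (hjb.trans hb), phases_drop_of_lt ha, List.length_cons,
    Nat.add_sub_cancel]
  obtain ⟨n, hn⟩ := Nat.exists_eq_add_of_le' hb_phases
  rw [hn, Nat.add_sub_cancel] at hrest
  rw [hn, mul_add, mul_one]
  omega
termination_by r.length - a
decreasing_by have := lt_phaseEnd k' r a; omega

theorem sub_mul_numPhases_le_sum_newCounts (hk : 1 ≤ k) (hkk' : k ≤ k') :
    (k' - k) * numPhases k' r ≤ (newCounts k r).sum := by
  simpa [numPhases, sum_newCounts_eq_totalNew] using
    sub_mul_length_phases_drop_le (r := r) hk hkk' (le_refl 0)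

theorem two_mul_numPhases_le {M : ℝ} (hk : 1 ≤ k) (hM : 0 < M) (havg : avgNew k r ≤ M)
    (hkk' : k + ⌈2 * M⌉₊ ≤ k') : 2 * (numPhases k' r : ℝ) ≤ numPhases k r := by
  have hle : k ≤ k' := by omega
  rcases (numPhases k r).eq_zero_or_pos with h0 | hpos
  · have := numPhases_le_of_le (r := r) hk hle
    simp [h0, Nat.eq_zero_of_le_zero (h0 ▸ this)]
  have hsum : ((newCounts k r).sum : ℝ) ≤ M * numPhases k r := by
    rwa [avgNew, div_le_iff₀ (by exact_mod_cast hpos)] at havg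
  have hkey : ((k' - k : ℕ) : ℝ) * numPhases k' r ≤ (newCounts k r).sum := by
    exact_mod_cast sub_mul_numPhases_le_sum_newCounts hk hle
  rw [Nat.cast_sub hle] at hkey
  have hgap : (k : ℝ) + 2 * M ≤ k' := by
    have : ((k + ⌈2 * M⌉₊ : ℕ) : ℝ) ≤ k' := by exact_mod_cast hkk'
    push_cast at this
    linarith [Nat.le_ceil (2 * M)]
  have hL' : (0 : ℝ) ≤ numPhases k' r := Nat.cast_nonneg _
  refine le_of_mul_le_mul_left ?_ hM
  nlinarith

end Phases

/-- for any `ε ∈ (0,1]` and `M > 0`, the number of `k` with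
`m(k,r) ≤ M` and `L(k,r) ≥ ε·L(1,r)` is at most `⌈2M⌉·(1 + log_{4/3}(1/ε))`. -/
theorem few_phase_rich_low_new_values {α : Type*} [DecidableEq α] (r : List α)
    (ε M : ℝ) (hε : 0 < ε) (hε1 : ε ≤ 1) (hM : 0 < M) :
    ({k : ℕ | 0 < k ∧ avgNew k r ≤ M ∧
        ε * (numPhases 1 r : ℝ) ≤ (numPhases k r : ℝ)}.ncard : ℝ)
      ≤ (⌈2 * M⌉₊ : ℝ) * (1 + Real.logb (4 / 3) (1 / ε)) := by
  set S := {k : ℕ | 0 < k ∧ avgNew k r ≤ M ∧ ε * (numPhases 1 r : ℝ) ≤ (numPhases k r : ℝ)}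
  rcases (numPhases 1 r).eq_zero_or_pos with h0 | hpos
  · -- then every `k ≥ 1` lies in `S`, and `ncard` of an infinite set is `0`
    have hL : ∀ k, 0 < k → numPhases k r = 0 := fun k hk =>
      Nat.eq_zero_of_le_zero (h0 ▸ numPhases_le_of_le le_rfl hk)
    have hinf : S.Infinite := (Set.Ioi_infinite 0).mono fun k hk =>
      ⟨hk, by simp [avgNew, hL k hk, hM.le], by simp [h0]⟩
    rw [hinf.ncard, Nat.cast_zero]
    have := Real.logb_nonneg (by norm_num : (1 : ℝ) < 4 / 3) (one_le_one_div hε hε1)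
    positivity
  refine ncard_le_mul_one_add_logb_of_decay (f := fun k => numPhases k r)
    (Nat.ceil_pos.2 (by linarith)) (by norm_num) hε hε1 (by exact_mod_cast hpos)
    (fun k hk => by exact_mod_cast numPhases_le_of_le le_rfl hk.1) (fun k hk => hk.2.2)
    fun k hk k' _ hkk' => ?_
  have hhalf := two_mul_numPhases_le hk.1 hM hk.2.1 hkk'
  have : (0 : ℝ) ≤ numPhases k' r := Nat.cast_nonneg _
  linarith
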